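/- For every endomorphism φ of a finitely generated free group F, there exists a finitely generated free group F₁ and an injective endomorphism ψ : F₁ → F₁ such that the mapping torus M(φ) is isomorphic to M(ψ). -/

import Mathlib

/-!
If `φ` is not injective, its image `φ(F)` is free (Nielsen–Schreier) of rank `r ≤ rank F`, by
counting homomorphisms to `ℤ/2`. In fact `r < rank F`: otherwise `φ` would induce a surjective
endomorphism of `F` with nontrivial kernel, but free groups are residually finite and
finitely generated residually finite groups are Hopfian. Since `t φ(g) t⁻¹ = g` in `M(φ)`,
the mapping torus of `φ` is also the mapping torus of the restriction `φ(F) → φ(F)`, so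
induction on the rank finishes the proof.
-/

open Monoid

/-- The mapping torus `M(φ) = ⟨G, t | t⁻¹ g t = φ(g)⟩` of an endomorphism `φ : G → G`. -/
def mappingTorus {G : Type*} [Group G] (φ : G →* G) : Type _ :=
  Coprod G (Multiplicative ℤ) ⧸ Subgroup.normalClosure
    {x | ∃ g : G, x = (Coprod.inr (Multiplicative.ofAdd (1 : ℤ)))⁻¹ * Coprod.inl g *
      Coprod.inr (Multiplicative.ofAdd (1 : ℤ)) * (Coprod.inl (φ g))⁻¹}

instance {G : Type*} [Group G] (φ : G →* G) : Group (mappingTorus φ) := by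
  unfold mappingTorus; infer_instance

/-- The canonical homomorphism `G → M(φ)`. -/
def mappingTorus.ofBase {G : Type*} [Group G] (φ : G →* G) : G →* mappingTorus φ :=
  (QuotientGroup.mk' _).comp Coprod.inl

/-- The stable letter `t ∈ M(φ)`. -/
def mappingTorus.t {G : Type*} [Group G] (φ : G →* G) : mappingTorus φ :=
  QuotientGroup.mk' _ (Coprod.inr (Multiplicative.ofAdd (1 : ℤ)))

open Function

theorem Set.exists_perm_apply_eq_mul {G : Type*} [Group G] (S : Set G) [Finite S] (a : G) :
    ∃ σ : Equiv.Perm S, ∀ s : S, a * s ∈ S → (σ s : G) = a * s := by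
  let e : {s : S // a * s ∈ S} ≃ {s : S // a⁻¹ * s ∈ S} :=
    { toFun := fun s => ⟨⟨a * s, s.2⟩, by simp⟩
      invFun := fun s => ⟨⟨a⁻¹ * s, s.2⟩, by simp⟩
      left_inv := fun s => by simp
      right_inv := fun s => by simp }
  have := Fintype.ofFinite S
  classical
  exact ⟨e.extendSubtype, fun s hs => by rw [e.extendSubtype_apply_of_mem s hs]; rfl⟩

namespace FreeGroup

instance residuallyFinite (α : Type*) : Group.ResiduallyFinite (FreeGroup α) := by
  refine Group.residuallyFinite_of_forall_exists_finite_monoidHom fun w hw => ?_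
  obtain ⟨L, rfl⟩ : ∃ L, mk L = w := Quot.exists_rep w
  let S : Set (FreeGroup α) := {x | x ∈ L.tails.map mk}
  have : Finite S := (List.finite_toSet _).to_subtype
  have mem_S : ∀ l, l <:+ L → mk l ∈ S := fun l hl =>
    List.mem_map.2 ⟨l, (List.mem_tails _ _).2 hl, rfl⟩
  choose σ hσ using fun a => S.exists_perm_apply_eq_mul (of a)
  let base : S := ⟨1, mem_S [] List.nil_suffix⟩
  -- The permutation representation on the suffixes of a word for `w` moves `1` to `w`.
  have key : ∀ l, l <:+ L → (lift σ (mk l) base : FreeGroup α) = mk l := by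
    intro l hl
    induction l with
    | nil => rfl
    | cons x l ih =>
      obtain ⟨a, b⟩ := x
      have hl' : l <:+ L := (List.suffix_cons _ _).trans hl
      have hmk : mk ((a, b) :: l) = mk [(a, b)] * mk l := by rw [mul_mk]; rfl
      have hp : lift σ (mk l) base = ⟨mk l, mem_S l hl'⟩ := Subtype.ext (ih hl')
      rw [hmk, _root_.map_mul, Equiv.Perm.mul_apply, hp]
      cases b with
      | true => exact hσ a _ (hmk ▸ mem_S _ hl)
      | false =>
        have hinv : mk [(a, false)] = (of a)⁻¹ := by simp [of, inv_mk, invRev]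
        have hq : (of a)⁻¹ * mk l ∈ S := hinv ▸ hmk ▸ mem_S _ hl
        have hσq : σ a ⟨_, hq⟩ = ⟨mk l, mem_S l hl'⟩ := Subtype.ext <| by
          rw [hσ a ⟨_, hq⟩ (by simpa using mem_S l hl'), mul_inv_cancel_left]
        rw [hinv, _root_.map_inv, lift_apply_of, ← hσq, Equiv.Perm.inv_def,
          Equiv.symm_apply_apply]
  refine ⟨Equiv.Perm S, inferInstance, inferInstance, lift σ, fun h => hw ?_⟩
  simpa [h] using (key L (List.suffix_refl L)).symm

end FreeGroup

instance Group.finite_monoidHom {G Q : Type*} [Group G] [Group Q] [Group.FG G] [Finite Q] :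
    Finite (G →* Q) := by
  obtain ⟨α, _, π, hπ⟩ := Group.fg_iff_exists_freeGroup_hom_surjective_finite.mp ‹_›
  have : Finite (FreeGroup α →* Q) := .of_equiv _ FreeGroup.lift
  exact .of_injective (fun q : G →* Q => q.comp π) fun _ _ h => (MonoidHom.cancel_right hπ).mp h

theorem Group.ResiduallyFinite.injective_of_surjective {G : Type*} [Group G] [Group.FG G]
    [Group.ResiduallyFinite G] {f : G →* G} (hf : Surjective f) : Injective f := by
  refine (injective_iff_map_eq_one f).mpr fun g hg => by_contra fun hg1 => ?_
  obtain ⟨N, hgN⟩ := Group.exists_finiteIndexNormalSubgroup_notMem g hg1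
  -- Precomposition with `f` is injective on the finite set `Hom(G, G ⧸ N)`, hence surjective.
  have hcomp : Injective fun q : G →* G ⧸ N.toSubgroup => q.comp f :=
    fun _ _ h => (MonoidHom.cancel_right hf).mp h
  obtain ⟨q, hq⟩ := (Finite.injective_iff_surjective.mp hcomp) (QuotientGroup.mk' N.toSubgroup)
  refine hgN (show g ∈ N.toSubgroup from ?_)
  rw [← QuotientGroup.eq_one_iff (N := N.toSubgroup), ← QuotientGroup.mk'_apply, ← hq,
    MonoidHom.comp_apply, hg, map_one]

theorem MonoidHom.injective_of_range_mulEquiv {G H : Type*} [Group G] [Group H] [Group.FG G]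
    [Group.ResiduallyFinite G] (f : G →* H) (e : f.range ≃* G) : Injective f :=
  MonoidHom.rangeRestrict_injective_iff.mp <| .of_comp (f := e) <|
    Group.ResiduallyFinite.injective_of_surjective (f := e.toMonoidHom.comp f.rangeRestrict)
      (e.surjective.comp f.rangeRestrict_surjective)

theorem IsFreeGroup.exists_mulEquiv_freeGroup_fin_le {G : Type*} [Group G] [IsFreeGroup G]
    {m : ℕ} (f : FreeGroup (Fin m) →* G) (hf : Surjective f) :
    ∃ r ≤ m, Nonempty (G ≃* FreeGroup (Fin r)) := by
  classical
  let Q := Multiplicative (ZMod 2)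
  let X := IsFreeGroup.Generators G
  have hrestrict : Injective fun χ : X → Q => FreeGroup.lift.symm ((IsFreeGroup.lift χ).comp f) :=
    fun _ _ h => IsFreeGroup.lift.injective <| (MonoidHom.cancel_right hf).mp <|
      FreeGroup.lift.symm.injective h
  have hsingle : Injective fun x : X => Pi.mulSingle x (Multiplicative.ofAdd (1 : ZMod 2)) := by
    intro x y h
    by_contra hxy
    simpa [Pi.mulSingle_apply, hxy] using congrFun h x
  have : Finite X := .of_injective _ (hrestrict.comp hsingle)
  have := Fintype.ofFinite X
  refine ⟨Fintype.card X, ?_, ⟨(IsFreeGroup.toFreeGroup G).trans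
    (FreeGroup.freeGroupCongr (Fintype.equivFin X))⟩⟩
  have hcard := Fintype.card_le_of_injective _ hrestrict
  simp only [Fintype.card_fun, Fintype.card_fin] at hcard
  exact (Nat.pow_le_pow_iff_right (by decide)).mp hcard

namespace mappingTorus

variable {G : Type*} [Group G] (φ : G →* G)

theorem t_inv_mul_ofBase_mul_t (g : G) : (t φ)⁻¹ * ofBase φ g * t φ = ofBase φ (φ g) := by
  have h : (QuotientGroup.mk' _ : Coprod G (Multiplicative ℤ) →* mappingTorus φ)
      ((Coprod.inr (Multiplicative.ofAdd (1 : ℤ)))⁻¹ * Coprod.inl g *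
        Coprod.inr (Multiplicative.ofAdd (1 : ℤ)) * (Coprod.inl (φ g))⁻¹) = 1 :=
    (QuotientGroup.eq_one_iff _).mpr (Subgroup.subset_normalClosure ⟨g, rfl⟩)
  simp only [map_mul, map_inv] at h
  exact mul_inv_eq_one.mp h

@[simp] theorem t_mul_ofBase_apply_mul_t_inv (g : G) :
    t φ * ofBase φ (φ g) * (t φ)⁻¹ = ofBase φ g := by
  rw [← t_inv_mul_ofBase_mul_t]
  group

section lift

variable {H : Type*} [Group H]

def lift (f : G →* H) (τ : H) (hτ : ∀ g, τ⁻¹ * f g * τ = f (φ g)) : mappingTorus φ →* H :=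
  QuotientGroup.lift _ (Coprod.lift f (zpowersHom H τ)) <| Subgroup.normalClosure_le_normal <| by
    rintro _ ⟨g, rfl⟩
    simp [← hτ g]

variable (f : G →* H) (τ : H) (hτ : ∀ g, τ⁻¹ * f g * τ = f (φ g))

@[simp] theorem lift_ofBase (g : G) : lift φ f τ hτ (ofBase φ g) = f g := by
  show QuotientGroup.lift _ _ _ (QuotientGroup.mk (Coprod.inl g)) = f g
  rw [QuotientGroup.lift_mk, Coprod.lift_apply_inl]

@[simp] theorem lift_t : lift φ f τ hτ (t φ) = τ := by
  show QuotientGroup.lift _ _ _ (QuotientGroup.mk (Coprod.inr (Multiplicative.ofAdd (1 : ℤ)))) = τ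
  rw [QuotientGroup.lift_mk, Coprod.lift_apply_inr, zpowersHom_apply, toAdd_ofAdd, zpow_one]

variable {φ} in
@[ext] theorem hom_ext {F₁ F₂ : mappingTorus φ →* H}
    (h : F₁.comp (ofBase φ) = F₂.comp (ofBase φ)) (ht : F₁ (t φ) = F₂ (t φ)) : F₁ = F₂ :=
  QuotientGroup.monoidHom_ext _ <| Coprod.hom_ext h (MonoidHom.ext_mint ht)

end lift

variable {G₁ : Type*} [Group G₁]

def congr (e : G ≃* G₁) {ψ : G₁ →* G₁} (h : ∀ g, ψ (e g) = e (φ g)) :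
    mappingTorus φ ≃* mappingTorus ψ :=
  have h' : ∀ g, φ (e.symm g) = e.symm (ψ g) := fun g => by
    rw [MulEquiv.eq_symm_apply, ← h, MulEquiv.apply_symm_apply]
  MonoidHom.toMulEquiv
    (lift φ ((ofBase ψ).comp e.toMonoidHom) (t ψ) fun g => by simp [t_inv_mul_ofBase_mul_t, h])
    (lift ψ ((ofBase φ).comp e.symm.toMonoidHom) (t φ) fun g => by
      simp [t_inv_mul_ofBase_mul_t, h'])
    (by ext <;> simp) (by ext <;> simp)

def equivRestrict {K : Subgroup G} (hK : φ.range ≤ K) {ψ : K →* K}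
    (hψ : ∀ k, (ψ k : G) = φ k) : mappingTorus φ ≃* mappingTorus ψ :=
  let c := (ofBase ψ).comp (φ.codRestrict K fun g => hK ⟨g, rfl⟩)
  have hc : ∀ g, c (φ g) = (t ψ)⁻¹ * c g * t ψ := fun g => by
    simp only [c, MonoidHom.comp_apply]
    rw [t_inv_mul_ofBase_mul_t]
    exact congrArg (ofBase ψ) (Subtype.ext (hψ (φ.codRestrict K _ g)).symm)
  -- The inverse of the inclusion `K → G` sends `g` to `t φ(g) t⁻¹`.
  MonoidHom.toMulEquiv
    (lift φ ((MulAut.conj (t ψ)).toMonoidHom.comp c) (t ψ) fun g => by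
      simp [hc, mul_assoc])
    (lift ψ ((ofBase φ).comp K.subtype) (t φ) fun k => by
      simp [t_inv_mul_ofBase_mul_t, hψ])
    (by
      ext g
      · simp [c]
      · simp)
    (by
      ext k
      · have hk : (⟨φ k, hK ⟨k, rfl⟩⟩ : K) = ψ k := Subtype.ext (hψ k).symm
        simp [c, hk]
      · simp)

end mappingTorus

theorem mappingTorus_iso_injective_case (m : ℕ)
    (φ : FreeGroup (Fin m) →* FreeGroup (Fin m)) :
    ∃ (n : ℕ) (ψ : FreeGroup (Fin n) →* FreeGroup (Fin n)),
      Function.Injective ψ ∧ Nonempty (mappingTorus φ ≃* mappingTorus ψ) := by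
  induction m using Nat.strong_induction_on with
  | _ m ih =>
  by_cases hφ : Function.Injective φ
  · exact ⟨m, φ, hφ, ⟨MulEquiv.refl _⟩⟩
  obtain ⟨r, hrm, ⟨e⟩⟩ :=
    IsFreeGroup.exists_mulEquiv_freeGroup_fin_le φ.rangeRestrict φ.rangeRestrict_surjective
  have hr : r < m := hrm.lt_of_ne fun h => hφ (by subst h; exact φ.injective_of_range_mulEquiv e)
  let φ' := φ.rangeRestrict.comp φ.range.subtype
  obtain ⟨n, ψ, hψ, ⟨e'⟩⟩ := ih r hr ((e.toMonoidHom.comp φ').comp e.symm.toMonoidHom)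
  exact ⟨n, ψ, hψ, ⟨((mappingTorus.equivRestrict φ le_rfl (fun _ => rfl)).trans
    (mappingTorus.congr φ' e (fun g => by simp))).trans e'⟩⟩
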